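/- arXiv:2509.02829 — 2 statements merged into one kernel-verified Lean document; each statement's English description precedes it below -/
import Mathlib

section
/- If C is a d-dimensional copula and Č_n is its checkerboard approximation at discretization level n, then sup over v in [0,1]^d of |Č_n(v) − C(v)| is at most d/n. -/
/-! The checkerboard measure `Q` gives every grid box `B_i` the same mass as `P`, and both
measures live on `⋃ i, B_i = [0,1]^d` without charging the hyperplanes `u ℓ = 0`; so their
distribution functions agree at every grid point `k / n`. Any `v ∈ [0,1]^d` lies between the grid
points `⌊n v⌋ / n ≤ v ≤ ⌈n v⌉ / n`, and since the marginals of `P` are uniform, `P` puts mass at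
most `d / n` between the two corresponding lower orthants (a union of `d` slabs of width `≤ 1 / n`).
Both distribution functions are monotone, hence differ at `v` by at most `d / n`. -/

open MeasureTheory Real BigOperators

noncomputable def intA (n : ℕ) (j : Fin n) : Set ℝ :=
  if j.val = 0 then Set.Icc 0 (1 / n) else Set.Ioc ((j.val : ℝ) / n) (((j.val : ℝ) + 1) / n)

noncomputable def box (d n : ℕ) (i : Fin d → Fin n) : Set (Fin d → ℝ) :=
  Set.univ.pi fun ℓ => intA n (i ℓ)

noncomputable def checkDensity (d n : ℕ) (p : (Fin d → Fin n) → ℝ) (v : Fin d → ℝ) : ℝ :=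
  (n : ℝ) ^ d * ∑ i : Fin d → Fin n, (box d n i).indicator (fun _ => p i) v

noncomputable def checkMeasure (d n : ℕ) (p : (Fin d → Fin n) → ℝ) :
    Measure (Fin d → ℝ) :=
  volume.withDensity fun v => ENNReal.ofReal (checkDensity d n p v)

/-- Distribution function of a measure on `[0,1]^d`. -/
noncomputable def df (d : ℕ) (P : Measure (Fin d → ℝ)) (v : Fin d → ℝ) : ℝ :=
  (P {u | ∀ ℓ, u ℓ ≤ v ℓ}).toReal

open Set Function

section Intervals

variable {n : ℕ}

lemma measurableSet_intA (j : Fin n) : MeasurableSet (intA n j) := by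
  unfold intA
  split_ifs
  exacts [measurableSet_Icc, measurableSet_Ioc]

lemma intA_eq_Ioc {j : Fin n} (hj : (j : ℕ) ≠ 0) :
    intA n j = Ioc ((j : ℕ) / (n : ℝ)) (((j : ℕ) + 1) / n) :=
  if_neg hj

lemma intA_subset_Icc (j : Fin n) : intA n j ⊆ Icc 0 (((j : ℕ) + 1) / (n : ℝ)) := by
  by_cases hj : (j : ℕ) = 0
  · simp [intA, hj]
  · rw [intA_eq_Ioc hj]
    exact Ioc_subset_Icc_self.trans (Icc_subset_Icc_left (by positivity))

lemma Ioc_subset_intA (j : Fin n) : Ioc ((j : ℕ) / (n : ℝ)) (((j : ℕ) + 1) / n) ⊆ intA n j := by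
  by_cases hj : (j : ℕ) = 0
  · simpa [intA, hj] using Ioc_subset_Icc_self
  · rw [intA_eq_Ioc hj]

lemma volume_intA (j : Fin n) : volume (intA n j) = ENNReal.ofReal (1 / n) := by
  by_cases hj : (j : ℕ) = 0
  · simp [intA, hj]
  · rw [intA_eq_Ioc hj, Real.volume_Ioc]
    ring_nf

lemma pairwise_disjoint_intA : Pairwise (Disjoint on intA n) := by
  refine (pairwise_disjoint_on _).2 fun a b hab => disjoint_left.2 fun x hxa hxb => ?_
  rw [intA_eq_Ioc (by omega : (b : ℕ) ≠ 0)] at hxb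
  have hab' : ((a : ℕ) + 1 : ℝ) ≤ (b : ℕ) := by exact_mod_cast hab
  have hxb' : x ≤ (b : ℕ) / (n : ℝ) :=
    (intA_subset_Icc a hxa).2.trans (div_le_div_of_nonneg_right hab' n.cast_nonneg)
  exact hxb.1.not_ge hxb'

lemma Icc_subset_iUnion_intA (hn : 0 < n) : Icc (0 : ℝ) 1 ⊆ ⋃ j : Fin n, intA n j := by
  rintro x ⟨hx0, hx1⟩
  rw [mem_iUnion]
  rcases hx0.eq_or_lt with rfl | hx0
  · exact ⟨⟨0, hn⟩, by simp [intA]⟩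
  have hn' : (0 : ℝ) < n := by exact_mod_cast hn
  set m := ⌈n * x⌉₊
  have hm : 0 < m := Nat.ceil_pos.2 (by positivity)
  have hmn : m ≤ n := Nat.ceil_le.2 (by nlinarith)
  refine ⟨⟨m - 1, by omega⟩, Ioc_subset_intA _ ⟨?_, ?_⟩⟩
  · rw [div_lt_iff₀ hn', Nat.cast_pred hm]
    linarith [Nat.ceil_lt_add_one (by positivity : (0 : ℝ) ≤ n * x)]
  · rw [le_div_iff₀ hn', Nat.cast_pred hm]
    linarith [Nat.le_ceil ((n : ℝ) * x)]

lemma intA_inter_Iic_subset {j : Fin n} {k : ℕ} (hk : k ≤ j) :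
    intA n j ∩ Iic ((k : ℝ) / n) ⊆ {0} := by
  rintro x ⟨hxj, hxk⟩
  by_cases hj : (j : ℕ) = 0
  · obtain rfl : k = 0 := by omega
    exact le_antisymm (by simpa using hxk) (intA_subset_Icc j hxj).1
  · rw [intA_eq_Ioc hj] at hxj
    exact absurd (hxk.trans (div_le_div_of_nonneg_right (by exact_mod_cast hk) n.cast_nonneg))
      hxj.1.not_ge

end Intervals

section Boxes

variable {d n : ℕ}

lemma measurableSet_box (i : Fin d → Fin n) : MeasurableSet (box d n i) :=
  MeasurableSet.univ_pi fun ℓ => measurableSet_intA (i ℓ)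

lemma pairwise_disjoint_box : Pairwise (Disjoint on box d n) := fun _ _ h =>
  let ⟨ℓ, hℓ⟩ := Function.ne_iff.1 h
  disjoint_univ_pi.2 ⟨ℓ, pairwise_disjoint_intA hℓ⟩

lemma volume_box (i : Fin d → Fin n) : volume (box d n i) = ENNReal.ofReal (1 / n) ^ d := by
  simp [box, volume_pi_pi, volume_intA]

lemma pi_Icc_subset_iUnion_box (hn : 0 < n) :
    univ.pi (fun _ : Fin d => Icc (0 : ℝ) 1) ⊆ ⋃ i, box d n i := by
  unfold box
  rw [iUnion_univ_pi]
  exact pi_mono fun _ _ => Icc_subset_iUnion_intA hn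

lemma box_subset_Iic_grid {i : Fin d → Fin n} {k : Fin d → ℕ} (hik : ∀ ℓ, (i ℓ : ℕ) < k ℓ) :
    box d n i ⊆ Iic fun ℓ => (k ℓ : ℝ) / n := fun _ hu ℓ =>
  (intA_subset_Icc _ (hu ℓ trivial)).2.trans
    (div_le_div_of_nonneg_right (by exact_mod_cast hik ℓ) n.cast_nonneg)

variable {μ ν : Measure (Fin d → ℝ)}

lemma measure_eq_sum_box_inter (hμ : μ (⋃ i, box d n i)ᶜ = 0) {s : Set (Fin d → ℝ)}
    (hs : MeasurableSet s) : μ s = ∑ i, μ (box d n i ∩ s) := by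
  rw [← measure_inter_conull hμ, inter_comm, iUnion_inter, measure_iUnion, tsum_fintype]
  · exact fun i j h => (pairwise_disjoint_box h).mono inter_subset_left inter_subset_left
  · exact fun i => (measurableSet_box i).inter hs

lemma measure_box_inter_Iic_grid (hμ : ∀ ℓ, μ {u | u ℓ = 0} = 0) (i : Fin d → Fin n)
    (k : Fin d → ℕ) :
    μ (box d n i ∩ Iic fun ℓ => (k ℓ : ℝ) / n) =
      if ∀ ℓ, (i ℓ : ℕ) < k ℓ then μ (box d n i) else 0 := by
  split_ifs with hik
  · rw [inter_eq_left.2 (box_subset_Iic_grid hik)]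
  · simp only [not_forall, not_lt] at hik
    obtain ⟨ℓ, hℓ⟩ := hik
    exact measure_mono_null (fun u hu => intA_inter_Iic_subset hℓ ⟨hu.1 ℓ trivial, hu.2 ℓ⟩) (hμ ℓ)

lemma measure_Iic_grid_eq (hμ : μ (⋃ i, box d n i)ᶜ = 0) (hν : ν (⋃ i, box d n i)ᶜ = 0)
    (hμ₀ : ∀ ℓ, μ {u | u ℓ = 0} = 0) (hν₀ : ∀ ℓ, ν {u | u ℓ = 0} = 0)
    (hbox : ∀ i, μ (box d n i) = ν (box d n i)) (k : Fin d → ℕ) :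
    μ (Iic fun ℓ => (k ℓ : ℝ) / n) = ν (Iic fun ℓ => (k ℓ : ℝ) / n) := by
  rw [measure_eq_sum_box_inter hμ measurableSet_Iic, measure_eq_sum_box_inter hν measurableSet_Iic]
  refine Finset.sum_congr rfl fun i _ => ?_
  rw [measure_box_inter_Iic_grid hμ₀, measure_box_inter_Iic_grid hν₀, hbox]

end Boxes

section Checkerboard

variable {d n : ℕ} {p : (Fin d → Fin n) → ℝ}

lemma checkDensity_of_mem_box {i : Fin d → Fin n} {v : Fin d → ℝ} (hv : v ∈ box d n i) :
    checkDensity d n p v = n ^ d * p i := by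
  rw [checkDensity, Finset.sum_eq_single i, indicator_of_mem hv]
  · exact fun j _ hji => indicator_of_notMem ((pairwise_disjoint_box hji).notMem_of_mem_right hv) _
  · simp

lemma checkDensity_of_notMem {v : Fin d → ℝ} (hv : v ∉ ⋃ i, box d n i) :
    checkDensity d n p v = 0 := by
  simp only [mem_iUnion, not_exists] at hv
  simp [checkDensity, indicator_of_notMem (hv _)]

lemma checkMeasure_box (hn : 0 < n) (i : Fin d → Fin n) :
    checkMeasure d n p (box d n i) = ENNReal.ofReal (p i) := by
  rw [checkMeasure, withDensity_apply _ (measurableSet_box i),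
    setLIntegral_congr_fun (measurableSet_box i) fun v hv => by rw [checkDensity_of_mem_box hv],
    setLIntegral_const, volume_box, ← ENNReal.ofReal_pow (by positivity),
    ← ENNReal.ofReal_mul' (by positivity)]
  have hn' : (n : ℝ) ≠ 0 := Nat.cast_ne_zero.2 hn.ne'
  rw [mul_right_comm, ← mul_pow, mul_one_div_cancel hn', one_pow, one_mul]

lemma checkMeasure_compl_iUnion_box : checkMeasure d n p (⋃ i, box d n i)ᶜ = 0 := by
  have hs : MeasurableSet (⋃ i, box d n i)ᶜ := (MeasurableSet.iUnion measurableSet_box).compl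
  rw [checkMeasure, withDensity_apply _ hs, setLIntegral_congr_fun hs fun v hv => by
    rw [checkDensity_of_notMem hv, ENNReal.ofReal_zero]]
  exact lintegral_zero

lemma checkMeasure_coord_eq (ℓ : Fin d) (c : ℝ) : checkMeasure d n p {u | u ℓ = c} = 0 :=
  withDensity_absolutelyContinuous _ _ <| by
    rw [volume_pi]
    exact Measure.pi_hyperplane (fun _ : Fin d => (volume : Measure ℝ)) ℓ c

lemma isFiniteMeasure_checkMeasure (hn : 0 < n) : IsFiniteMeasure (checkMeasure d n p) := by
  refine ⟨?_⟩
  rw [measure_eq_sum_box_inter checkMeasure_compl_iUnion_box MeasurableSet.univ]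
  simp [checkMeasure_box hn]

end Checkerboard

section UniformMarginals

variable {ι : Type*} {P : Measure (ι → ℝ)} {ℓ : ι}

lemma measure_coord_mem (hℓ : P.map (fun u => u ℓ) = volume.restrict (Icc 0 1)) {s : Set ℝ}
    (hs : MeasurableSet s) : P {u | u ℓ ∈ s} = volume (s ∩ Icc 0 1) := by
  rw [← Measure.restrict_apply hs, ← hℓ, Measure.map_apply (measurable_pi_apply ℓ) hs]
  rfl

lemma measure_coord_eq (hℓ : P.map (fun u => u ℓ) = volume.restrict (Icc 0 1)) (c : ℝ) :
    P {u | u ℓ = c} = 0 := by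
  have h := measure_coord_mem hℓ (measurableSet_singleton c)
  exact h.trans (measure_mono_null inter_subset_left volume_singleton)

lemma measure_coord_notMem_Icc (hℓ : P.map (fun u => u ℓ) = volume.restrict (Icc 0 1)) :
    P {u | u ℓ ∉ Icc 0 1} = 0 := by
  exact (measure_coord_mem hℓ measurableSet_Icc.compl).trans
    (by rw [compl_inter_self, measure_empty])

lemma measureReal_coord_mem_Ioc_le (hℓ : P.map (fun u => u ℓ) = volume.restrict (Icc 0 1))
    {a b : ℝ} (hab : a ≤ b) : P.real {u | u ℓ ∈ Ioc a b} ≤ b - a := by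
  refine ENNReal.toReal_le_of_le_ofReal (sub_nonneg.2 hab) ?_
  rw [measure_coord_mem hℓ measurableSet_Ioc, ← Real.volume_Ioc]
  exact measure_mono inter_subset_left

end UniformMarginals

section DistributionFunction

variable {d n : ℕ} {P : Measure (Fin d → ℝ)}

lemma measure_compl_iUnion_box (hn : 0 < n)
    (hP : ∀ ℓ, P.map (fun u => u ℓ) = volume.restrict (Icc 0 1)) :
    P (⋃ i, box d n i)ᶜ = 0 := by
  refine measure_mono_null (fun u hu => ?_)
    (measure_iUnion_null fun ℓ => measure_coord_notMem_Icc (hP ℓ))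
  by_contra h
  simp only [mem_iUnion, not_exists] at h
  exact hu (pi_Icc_subset_iUnion_box hn fun ℓ _ => of_not_not (h ℓ))

lemma df_mono (μ : Measure (Fin d → ℝ)) [IsFiniteMeasure μ] : Monotone (df d μ) :=
  fun _ _ h => measureReal_mono (Iic_subset_Iic.2 h)

lemma df_le_df_add_sum [IsFiniteMeasure P]
    (hP : ∀ ℓ, P.map (fun u => u ℓ) = volume.restrict (Icc 0 1)) {a b : Fin d → ℝ} (hab : a ≤ b) :
    df d P b ≤ df d P a + ∑ ℓ, (b ℓ - a ℓ) := by
  have hcover : Iic b ⊆ Iic a ∪ ⋃ ℓ, {u | u ℓ ∈ Ioc (a ℓ) (b ℓ)} := fun u hu => by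
    by_cases hua : u ≤ a
    · exact Or.inl hua
    · obtain ⟨ℓ, hℓ⟩ : ∃ ℓ, a ℓ < u ℓ := by simpa [Pi.le_def] using hua
      exact Or.inr (mem_iUnion.2 ⟨ℓ, hℓ, hu ℓ⟩)
  calc df d P b = P.real (Iic b) := rfl
    _ ≤ P.real (Iic a) + P.real (⋃ ℓ, {u | u ℓ ∈ Ioc (a ℓ) (b ℓ)}) :=
      (measureReal_mono hcover).trans (measureReal_union_le _ _)
    _ ≤ P.real (Iic a) + ∑ ℓ, P.real {u | u ℓ ∈ Ioc (a ℓ) (b ℓ)} := by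
      gcongr
      exact measureReal_iUnion_fintype_le _
    _ ≤ P.real (Iic a) + ∑ ℓ, (b ℓ - a ℓ) := by
      gcongr with ℓ
      exact measureReal_coord_mem_Ioc_le (hP ℓ) (hab ℓ)

end DistributionFunction

section GridBracket

variable {n : ℕ} {x : ℝ}

lemma floor_mul_div_le (hx : 0 ≤ x) : (⌊n * x⌋₊ : ℝ) / n ≤ x :=
  div_le_of_le_mul₀ n.cast_nonneg hx (by linarith [Nat.floor_le (by positivity : (0 : ℝ) ≤ n * x)])

lemma le_ceil_mul_div (hn : 0 < n) : x ≤ (⌈n * x⌉₊ : ℝ) / n := by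
  rw [le_div_iff₀ (by exact_mod_cast hn), mul_comm]
  exact Nat.le_ceil _

lemma ceil_mul_div_sub_floor_mul_div_le : (⌈n * x⌉₊ : ℝ) / n - ⌊n * x⌋₊ / n ≤ 1 / n := by
  rw [← sub_div]
  refine div_le_div_of_nonneg_right ?_ n.cast_nonneg
  have h : (⌈n * x⌉₊ : ℝ) ≤ ⌊n * x⌋₊ + 1 := by exact_mod_cast Nat.ceil_le_floor_add_one _
  linarith

end GridBracket

theorem checkerboard_approximation_uniform_error_general
    (d n : ℕ) (hn : 2 ≤ n)
    (P : Measure (Fin d → ℝ)) [IsProbabilityMeasure P]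
    (hmarg : ∀ ℓ : Fin d, P.map (fun v => v ℓ) = volume.restrict (Set.Icc (0 : ℝ) 1))
    (v : Fin d → ℝ) (hv : v ∈ Set.univ.pi fun _ : Fin d => Set.Icc (0 : ℝ) 1) :
    |df d (checkMeasure d n fun i => (P (box d n i)).toReal) v - df d P v| ≤ d / n := by
  have hn₀ : 0 < n := by omega
  set Q := checkMeasure d n fun i => (P (box d n i)).toReal
  have : IsFiniteMeasure Q := isFiniteMeasure_checkMeasure hn₀
  have hgrid (k : Fin d → ℕ) : df d Q (fun ℓ => k ℓ / n) = df d P (fun ℓ => k ℓ / n) :=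
    congrArg ENNReal.toReal <| measure_Iic_grid_eq checkMeasure_compl_iUnion_box
      (measure_compl_iUnion_box hn₀ hmarg) (fun ℓ => checkMeasure_coord_eq ℓ 0)
      (fun ℓ => measure_coord_eq (hmarg ℓ) 0)
      (fun i => by rw [checkMeasure_box hn₀, ENNReal.ofReal_toReal (measure_ne_top P _)]) k
  set a : Fin d → ℝ := fun ℓ => ⌊n * v ℓ⌋₊ / n
  set b : Fin d → ℝ := fun ℓ => ⌈n * v ℓ⌉₊ / n
  have hav : a ≤ v := fun ℓ => floor_mul_div_le (hv ℓ trivial).1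
  have hvb : v ≤ b := fun ℓ => le_ceil_mul_div hn₀
  have hgap : df d P b ≤ df d P a + d / n := calc
    df d P b ≤ df d P a + ∑ ℓ, (b ℓ - a ℓ) := df_le_df_add_sum hmarg (hav.trans hvb)
    _ ≤ df d P a + ∑ _ : Fin d, 1 / (n : ℝ) := by
      gcongr
      exact ceil_mul_div_sub_floor_mul_div_le
    _ = df d P a + d / n := by simp [div_eq_mul_inv]
  have hQa := hgrid fun ℓ => ⌊n * v ℓ⌋₊
  have hQb := hgrid fun ℓ => ⌈n * v ℓ⌉₊
  rw [abs_sub_le_iff]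
  constructor <;> linarith [df_mono Q hav, df_mono Q hvb, df_mono P hav, df_mono P hvb]

/-- If `C` is the copula (distribution function) of a `d`-stochastic measure `P`
and `Č_n` the distribution function of its checkerboard approximation (the
checkerboard measure whose skeleton is `i ↦ P (B_i)`), then
`sup_{v ∈ [0,1]^d} |Č_n(v) − C(v)| ≤ d / n`. -/
theorem checkerboard_approximation_uniform_error
    (d n : ℕ) (hd : 2 ≤ d) (hn : 2 ≤ n)
    (P : Measure (Fin d → ℝ)) [IsProbabilityMeasure P]
    (hmarg : ∀ ℓ : Fin d, P.map (fun v => v ℓ) = volume.restrict (Set.Icc (0 : ℝ) 1))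
    (v : Fin d → ℝ) (hv : v ∈ Set.univ.pi fun _ : Fin d => Set.Icc (0 : ℝ) 1) :
    |df d (checkMeasure d n fun i => (P (box d n i)).toReal) v - df d P v| ≤ d / n :=
  checkerboard_approximation_uniform_error_general d n hn P hmarg v hv
end

section
/- Let q† be a probability array on [n]^d, {B_1,…,B_b} a partition of [n]^d, and a_1,…,a_b ∈ [0,1] with Σ a_k = 1 and a_k = 0 whenever B_k ∩ supp(q†) = ∅. Then the I-projection q* of q† on the set E' = ∩_k {p : Σ_{i∈B_k} p_i = a_k} exists, is unique, and is given by the scaling q*_i = q†_i · a_k / (Σ_{i'∈B_k} q†_{i'}) for i ∈ B_k ∩ supp(q†), and q*_i = 0 otherwise. -/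
/-! On each block `B k` the scaled array `q* = blockScale q† B a` is `q†` times the constant
`a k / Q k`, where `Q k = ∑_{B k} q†`. So for every `p` with block masses `a` and `p ≪ q†`, the
logarithm of `q† / q*` integrates against `p` exactly as against `q*`, which is the Pythagorean
identity `I(p‖q†) = I(p‖q*) + I(q*‖q†)`. Gibbs' inequality `I(p‖q*) ≥ 0`, with equality only at
`p = q*`, then gives minimality and uniqueness; arrays with `p ≪̸ q†` have `I(p‖q†) = ∞`. -/

open MeasureTheory Real BigOperators ENNReal

def IsProbArray {d n : ℕ} (p : (Fin d → Fin n) → ℝ) : Prop :=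
  (∀ i, 0 ≤ p i) ∧ ∑ i : Fin d → Fin n, p i = 1

noncomputable def klArr {d n : ℕ} (p q : (Fin d → Fin n) → ℝ) : ℝ≥0∞ :=
  open scoped Classical in
  if ∀ i, q i = 0 → p i = 0
  then ENNReal.ofReal (∑ i : Fin d → Fin n, p i * Real.log (p i / q i)) else ⊤

open Finset InformationTheory

section Gibbs

variable {p q : ℝ}

lemma mul_log_div_sub_sub_eq_mul_klFun (hq : q ≠ 0) :
    p * log (p / q) - (p - q) = q * klFun (p / q) := by
  rw [klFun_apply]
  field_simp
  ring

lemma mul_log_div_sub_sub_nonneg (hp : 0 ≤ p) (hq : 0 ≤ q) (hpq : q = 0 → p = 0) :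
    0 ≤ p * log (p / q) - (p - q) := by
  rcases hq.eq_or_lt with rfl | hq
  · simp [hpq rfl]
  rw [mul_log_div_sub_sub_eq_mul_klFun hq.ne']
  exact mul_nonneg hq.le (klFun_nonneg (div_nonneg hp hq.le))

lemma mul_log_div_sub_sub_eq_zero_iff (hp : 0 ≤ p) (hq : 0 ≤ q) (hpq : q = 0 → p = 0) :
    p * log (p / q) - (p - q) = 0 ↔ p = q := by
  rcases hq.eq_or_lt with rfl | hq
  · simp [hpq rfl]
  rw [mul_log_div_sub_sub_eq_mul_klFun hq.ne', mul_eq_zero_iff_left hq.ne',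
    klFun_eq_zero_iff (div_nonneg hp hq.le), div_eq_one_iff_eq hq.ne']

end Gibbs

/-- Meaningful only for `p ≪ q`: a term with `q i = 0 < p i` contributes `0`, not `∞`. -/
noncomputable def relEntropy {ι : Type*} [Fintype ι] (p q : ι → ℝ) : ℝ :=
  ∑ i, p i * log (p i / q i)

section RelEntropy

variable {ι : Type*} [Fintype ι] {p q : ι → ℝ}

lemma relEntropy_self (p : ι → ℝ) : relEntropy p p = 0 :=
  sum_eq_zero fun i _ => by
    rcases eq_or_ne (p i) 0 with h | h <;> simp [h]

lemma relEntropy_eq_sum_sub_sub (hsum : ∑ i, p i = ∑ i, q i) :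
    relEntropy p q = ∑ i, (p i * log (p i / q i) - (p i - q i)) := by
  rw [sum_sub_distrib, sum_sub_distrib, hsum, sub_self, sub_zero, relEntropy]

lemma relEntropy_nonneg (hp : ∀ i, 0 ≤ p i) (hq : ∀ i, 0 ≤ q i)
    (hpq : ∀ i, q i = 0 → p i = 0) (hsum : ∑ i, p i = ∑ i, q i) : 0 ≤ relEntropy p q := by
  rw [relEntropy_eq_sum_sub_sub hsum]
  exact sum_nonneg fun i _ => mul_log_div_sub_sub_nonneg (hp i) (hq i) (hpq i)

lemma eq_of_relEntropy_nonpos (hp : ∀ i, 0 ≤ p i) (hq : ∀ i, 0 ≤ q i)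
    (hpq : ∀ i, q i = 0 → p i = 0) (hsum : ∑ i, p i = ∑ i, q i) (h : relEntropy p q ≤ 0) :
    p = q := by
  rw [relEntropy_eq_sum_sub_sub hsum] at h
  have hterm (i : ι) : 0 ≤ p i * log (p i / q i) - (p i - q i) :=
    mul_log_div_sub_sub_nonneg (hp i) (hq i) (hpq i)
  have hzero :=
    (sum_eq_zero_iff_of_nonneg fun i _ => hterm i).mp (h.antisymm (sum_nonneg fun i _ => hterm i))
  funext i
  exact (mul_log_div_sub_sub_eq_zero_iff (hp i) (hq i) (hpq i)).mp (hzero i (mem_univ i))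

end RelEntropy

noncomputable def blockScale {ι κ : Type*} [Fintype κ] [DecidableEq ι]
    (q : ι → ℝ) (B : κ → Finset ι) (a : κ → ℝ) (i : ι) : ℝ :=
  q i * ∑ k, if i ∈ B k then a k / ∑ i' ∈ B k, q i' else 0

section Partition

variable {ι κ : Type*} [Fintype κ] [DecidableEq ι] {B : κ → Finset ι}

lemma sum_ite_mem_eq_of_mem (hB : ∀ k k', k ≠ k' → Disjoint (B k) (B k'))
    {i : ι} {k : κ} (hi : i ∈ B k) (f : κ → ℝ) :
    (∑ k', if i ∈ B k' then f k' else 0) = f k := by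
  rw [sum_eq_single_of_mem k (mem_univ k), if_pos hi]
  exact fun k' _ hk' => if_neg fun hi' => disjoint_left.mp (hB k' k hk') hi' hi

lemma sum_eq_sum_sum_of_partition [Fintype ι] (hB : ∀ k k', k ≠ k' → Disjoint (B k) (B k'))
    (hcover : ∀ i, ∃ k, i ∈ B k) (f : ι → ℝ) : ∑ i, f i = ∑ k, ∑ i ∈ B k, f i := by
  rw [← sum_biUnion fun k _ k' _ hk => hB k k' hk]
  congr 1
  ext i
  simpa using hcover i

lemma sum_eq_sum_of_sum_block_eq [Fintype ι] (hB : ∀ k k', k ≠ k' → Disjoint (B k) (B k'))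
    (hcover : ∀ i, ∃ k, i ∈ B k) {f g : ι → ℝ} (h : ∀ k, ∑ i ∈ B k, f i = ∑ i ∈ B k, g i) :
    ∑ i, f i = ∑ i, g i := by
  rw [sum_eq_sum_sum_of_partition hB hcover f, sum_eq_sum_sum_of_partition hB hcover g]
  exact sum_congr rfl fun k _ => h k

variable {q : ι → ℝ} {a : κ → ℝ}

lemma blockScale_of_mem (hB : ∀ k k', k ≠ k' → Disjoint (B k) (B k')) {i : ι} {k : κ}
    (hi : i ∈ B k) : blockScale q B a i = q i * (a k / ∑ i' ∈ B k, q i') := by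
  rw [blockScale, sum_ite_mem_eq_of_mem hB hi]

lemma blockScale_eq_zero (q : ι → ℝ) (B : κ → Finset ι) (a : κ → ℝ) {i : ι} (hi : q i = 0) :
    blockScale q B a i = 0 := by
  rw [blockScale, hi, zero_mul]

lemma blockScale_nonneg (hq : ∀ i, 0 ≤ q i) (ha : ∀ k, 0 ≤ a k) (i : ι) :
    0 ≤ blockScale q B a i :=
  mul_nonneg (hq i) (sum_nonneg fun k _ => by
    split_ifs
    exacts [div_nonneg (ha k) (sum_nonneg fun i _ => hq i), le_rfl])

lemma sum_blockScale_block (hB : ∀ k k', k ≠ k' → Disjoint (B k) (B k'))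
    (hq : ∀ i, 0 ≤ q i) (hnull : ∀ k, (∀ i ∈ B k, q i = 0) → a k = 0) (k : κ) :
    ∑ i ∈ B k, blockScale q B a i = a k := by
  rw [sum_congr rfl fun i hi => blockScale_of_mem hB hi, ← sum_mul]
  rcases eq_or_ne (∑ i ∈ B k, q i) 0 with h | h
  · rw [h, zero_mul, hnull k ((sum_eq_zero_iff_of_nonneg fun i _ => hq i).mp h)]
  · field_simp

lemma eq_zero_of_blockScale_eq_zero (hB : ∀ k k', k ≠ k' → Disjoint (B k) (B k'))
    (hcover : ∀ i, ∃ k, i ∈ B k) (hq : ∀ i, 0 ≤ q i) {p : ι → ℝ} (hp : ∀ i, 0 ≤ p i)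
    (hpB : ∀ k, ∑ i ∈ B k, p i = a k) (hpq : ∀ i, q i = 0 → p i = 0) {i : ι}
    (hi : blockScale q B a i = 0) : p i = 0 := by
  obtain ⟨k, hik⟩ := hcover i
  rw [blockScale_of_mem hB hik] at hi
  rcases mul_eq_zero.mp hi with hi | hi
  · exact hpq i hi
  rcases div_eq_zero_iff.mp hi with hak | hQ
  · exact (sum_eq_zero_iff_of_nonneg fun i _ => hp i).mp (hpB k ▸ hak) i hik
  · exact hpq i ((sum_eq_zero_iff_of_nonneg fun i _ => hq i).mp hQ i hik)

lemma relEntropy_eq_relEntropy_blockScale_add [Fintype ι]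
    (hB : ∀ k k', k ≠ k' → Disjoint (B k) (B k')) (hcover : ∀ i, ∃ k, i ∈ B k)
    (hq : ∀ i, 0 ≤ q i) {p : ι → ℝ} (hp : ∀ i, 0 ≤ p i)
    (hpB : ∀ k, ∑ i ∈ B k, p i = a k) (hpq : ∀ i, q i = 0 → p i = 0) :
    relEntropy p q =
      relEntropy p (blockScale q B a) + ∑ k, a k * log (a k / ∑ i ∈ B k, q i) := by
  have hblock : ∀ k, ∀ i ∈ B k, p i * log (p i / q i) =
      p i * log (p i / blockScale q B a i) + p i * log (a k / ∑ i ∈ B k, q i) := by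
    intro k i hik
    rcases eq_or_ne (p i) 0 with hpi | hpi
    · simp [hpi]
    have hqsi := mt (eq_zero_of_blockScale_eq_zero hB hcover hq hp hpB hpq) hpi
    rw [blockScale_of_mem hB hik] at hqsi ⊢
    obtain ⟨hqi, hak, hQk⟩ : q i ≠ 0 ∧ a k ≠ 0 ∧ ∑ i ∈ B k, q i ≠ 0 := by
      simpa [not_or] using hqsi
    rw [← mul_add, ← log_mul (div_ne_zero hpi hqsi) (div_ne_zero hak hQk)]
    field_simp
  rw [relEntropy, relEntropy, sum_eq_sum_sum_of_partition hB hcover,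
    sum_eq_sum_sum_of_partition hB hcover, ← sum_add_distrib]
  refine sum_congr rfl fun k _ => ?_
  rw [sum_congr rfl (hblock k), sum_add_distrib, ← sum_mul, hpB k]

lemma relEntropy_blockScale_eq_sum [Fintype ι]
    (hB : ∀ k k', k ≠ k' → Disjoint (B k) (B k')) (hcover : ∀ i, ∃ k, i ∈ B k)
    (hq : ∀ i, 0 ≤ q i) (ha : ∀ k, 0 ≤ a k) (hnull : ∀ k, (∀ i ∈ B k, q i = 0) → a k = 0) :
    relEntropy (blockScale q B a) q = ∑ k, a k * log (a k / ∑ i ∈ B k, q i) := by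
  simpa [relEntropy_self] using relEntropy_eq_relEntropy_blockScale_add hB hcover hq
    (blockScale_nonneg hq ha) (sum_blockScale_block hB hq hnull)
    (fun _ => blockScale_eq_zero q B a)

lemma relEntropy_pythagorean_blockScale [Fintype ι]
    (hB : ∀ k k', k ≠ k' → Disjoint (B k) (B k')) (hcover : ∀ i, ∃ k, i ∈ B k)
    (hq : ∀ i, 0 ≤ q i) (ha : ∀ k, 0 ≤ a k) (hnull : ∀ k, (∀ i ∈ B k, q i = 0) → a k = 0)
    {p : ι → ℝ} (hp : ∀ i, 0 ≤ p i) (hpB : ∀ k, ∑ i ∈ B k, p i = a k)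
    (hpq : ∀ i, q i = 0 → p i = 0) :
    relEntropy p q = relEntropy p (blockScale q B a) + relEntropy (blockScale q B a) q := by
  rw [relEntropy_blockScale_eq_sum hB hcover hq ha hnull,
    relEntropy_eq_relEntropy_blockScale_add hB hcover hq hp hpB hpq]

lemma sum_eq_sum_blockScale [Fintype ι]
    (hB : ∀ k k', k ≠ k' → Disjoint (B k) (B k')) (hcover : ∀ i, ∃ k, i ∈ B k)
    (hq : ∀ i, 0 ≤ q i) (hnull : ∀ k, (∀ i ∈ B k, q i = 0) → a k = 0)
    {p : ι → ℝ} (hpB : ∀ k, ∑ i ∈ B k, p i = a k) : ∑ i, p i = ∑ i, blockScale q B a i :=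
  sum_eq_sum_of_sum_block_eq hB hcover fun k => by rw [hpB, sum_blockScale_block hB hq hnull]

lemma relEntropy_blockScale_nonneg [Fintype ι]
    (hB : ∀ k k', k ≠ k' → Disjoint (B k) (B k')) (hcover : ∀ i, ∃ k, i ∈ B k)
    (hq : ∀ i, 0 ≤ q i) (ha : ∀ k, 0 ≤ a k) (hnull : ∀ k, (∀ i ∈ B k, q i = 0) → a k = 0)
    {p : ι → ℝ} (hp : ∀ i, 0 ≤ p i) (hpB : ∀ k, ∑ i ∈ B k, p i = a k)
    (hpq : ∀ i, q i = 0 → p i = 0) : 0 ≤ relEntropy p (blockScale q B a) :=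
  relEntropy_nonneg hp (blockScale_nonneg hq ha)
    (fun _ => eq_zero_of_blockScale_eq_zero hB hcover hq hp hpB hpq)
    (sum_eq_sum_blockScale hB hcover hq hnull hpB)

lemma relEntropy_blockScale_le [Fintype ι]
    (hB : ∀ k k', k ≠ k' → Disjoint (B k) (B k')) (hcover : ∀ i, ∃ k, i ∈ B k)
    (hq : ∀ i, 0 ≤ q i) (ha : ∀ k, 0 ≤ a k) (hnull : ∀ k, (∀ i ∈ B k, q i = 0) → a k = 0)
    {p : ι → ℝ} (hp : ∀ i, 0 ≤ p i) (hpB : ∀ k, ∑ i ∈ B k, p i = a k)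
    (hpq : ∀ i, q i = 0 → p i = 0) : relEntropy (blockScale q B a) q ≤ relEntropy p q := by
  rw [relEntropy_pythagorean_blockScale hB hcover hq ha hnull hp hpB hpq]
  linarith [relEntropy_blockScale_nonneg hB hcover hq ha hnull hp hpB hpq]

lemma eq_blockScale_of_relEntropy_le [Fintype ι]
    (hB : ∀ k k', k ≠ k' → Disjoint (B k) (B k')) (hcover : ∀ i, ∃ k, i ∈ B k)
    (hq : ∀ i, 0 ≤ q i) (ha : ∀ k, 0 ≤ a k) (hnull : ∀ k, (∀ i ∈ B k, q i = 0) → a k = 0)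
    {p : ι → ℝ} (hp : ∀ i, 0 ≤ p i) (hpB : ∀ k, ∑ i ∈ B k, p i = a k)
    (hpq : ∀ i, q i = 0 → p i = 0) (h : relEntropy p q ≤ relEntropy (blockScale q B a) q) :
    p = blockScale q B a := by
  rw [relEntropy_pythagorean_blockScale hB hcover hq ha hnull hp hpB hpq] at h
  exact eq_of_relEntropy_nonpos hp (blockScale_nonneg hq ha)
    (fun _ => eq_zero_of_blockScale_eq_zero hB hcover hq hp hpB hpq)
    (sum_eq_sum_blockScale hB hcover hq hnull hpB) (by linarith)

end Partition

lemma klArr_eq_ofReal_relEntropy {d n : ℕ} {p q : (Fin d → Fin n) → ℝ}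
    (h : ∀ i, q i = 0 → p i = 0) : klArr p q = ENNReal.ofReal (relEntropy p q) := by
  rw [klArr, if_pos h, relEntropy]

lemma klArr_eq_top {d n : ℕ} {p q : (Fin d → Fin n) → ℝ} (h : ¬∀ i, q i = 0 → p i = 0) :
    klArr p q = ⊤ := by
  rw [klArr, if_neg h]

theorem Iprojection_on_partition_constraints_general
    (d n b : ℕ)
    (qd : (Fin d → Fin n) → ℝ) (hqd : IsProbArray qd)
    (B : Fin b → Finset (Fin d → Fin n))
    (hBdisj : ∀ k k', k ≠ k' → Disjoint (B k) (B k'))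
    (hBcover : ∀ i, ∃ k, i ∈ B k)
    (a : Fin b → ℝ) (ha0 : ∀ k, 0 ≤ a k)
    (hasum : ∑ k, a k = 1)
    (hanull : ∀ k, (∀ i ∈ B k, qd i = 0) → a k = 0)
    (E' : Set ((Fin d → Fin n) → ℝ))
    (hE' : E' = {p | IsProbArray p ∧ ∀ k, ∑ i ∈ B k, p i = a k})
    (qs : (Fin d → Fin n) → ℝ)
    (hqs : qs = fun i => qd i * ∑ k, if i ∈ B k then a k / (∑ i' ∈ B k, qd i') else 0) :
    qs ∈ E' ∧
    (∀ p ∈ E', klArr qs qd ≤ klArr p qd) ∧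
    (∀ p ∈ E', (∀ p' ∈ E', klArr p qd ≤ klArr p' qd) → p = qs) := by
  obtain ⟨hqd0, hqd1⟩ := hqd
  replace hqs : qs = blockScale qd B a := hqs
  subst hE' hqs
  have hqsB := sum_blockScale_block hBdisj hqd0 hanull
  have hqs1 : ∑ i, blockScale qd B a i = 1 := by
    rw [sum_eq_sum_sum_of_partition hBdisj hBcover]
    simp only [hqsB, hasum]
  have hqsE : blockScale qd B a ∈ {p | IsProbArray p ∧ ∀ k, ∑ i ∈ B k, p i = a k} :=
    ⟨⟨blockScale_nonneg hqd0 ha0, hqs1⟩, hqsB⟩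
  have hqsq : ∀ i, qd i = 0 → blockScale qd B a i = 0 := fun _ => blockScale_eq_zero qd B a
  have hqsKL := klArr_eq_ofReal_relEntropy hqsq
  refine ⟨hqsE, fun p ⟨⟨hp0, _⟩, hpB⟩ => ?_, fun p ⟨⟨hp0, _⟩, hpB⟩ hmin => ?_⟩
  · by_cases hpq : ∀ i, qd i = 0 → p i = 0
    · rw [hqsKL, klArr_eq_ofReal_relEntropy hpq]
      exact ofReal_le_ofReal (relEntropy_blockScale_le hBdisj hBcover hqd0 ha0 hanull hp0 hpB hpq)
    · rw [klArr_eq_top hpq]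
      exact le_top
  · have hle := hmin _ hqsE
    have hpq : ∀ i, qd i = 0 → p i = 0 := by
      by_contra hpq
      simp [klArr_eq_top hpq, hqsKL] at hle
    have hqsI := relEntropy_nonneg (blockScale_nonneg hqd0 ha0) hqd0 hqsq (hqs1.trans hqd1.symm)
    rw [hqsKL, klArr_eq_ofReal_relEntropy hpq, ofReal_le_ofReal_iff hqsI] at hle
    exact eq_blockScale_of_relEntropy_le hBdisj hBcover hqd0 ha0 hanull hp0 hpB hpq hle

/-- The `I`-projection of a probability array on the set determined by a
partition `B_1, …, B_b` and block masses `a_1, …, a_b` exists, is unique, and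
is given by blockwise scaling. -/
theorem Iprojection_on_partition_constraints
    (d n b : ℕ) (hd : 2 ≤ d) (hn : 2 ≤ n)
    (qd : (Fin d → Fin n) → ℝ) (hqd : IsProbArray qd)
    (B : Fin b → Finset (Fin d → Fin n))
    (hBdisj : ∀ k k', k ≠ k' → Disjoint (B k) (B k'))
    (hBcover : ∀ i, ∃ k, i ∈ B k)
    (a : Fin b → ℝ) (ha0 : ∀ k, 0 ≤ a k) (ha1 : ∀ k, a k ≤ 1)
    (hasum : ∑ k, a k = 1)
    (hanull : ∀ k, (∀ i ∈ B k, qd i = 0) → a k = 0)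
    (E' : Set ((Fin d → Fin n) → ℝ))
    (hE' : E' = {p | IsProbArray p ∧ ∀ k, ∑ i ∈ B k, p i = a k})
    (qs : (Fin d → Fin n) → ℝ)
    (hqs : qs = fun i => qd i * ∑ k, if i ∈ B k then a k / (∑ i' ∈ B k, qd i') else 0) :
    qs ∈ E' ∧
    (∀ p ∈ E', klArr qs qd ≤ klArr p qd) ∧
    (∀ p ∈ E', (∀ p' ∈ E', klArr p qd ≤ klArr p' qd) → p = qs) :=
  Iprojection_on_partition_constraints_general d n b qd hqd B hBdisj hBcover a ha0 hasum hanull E'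
    hE' qs hqs
end
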